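/- arXiv:1903.01373 — 4 statements merged into one kernel-verified Lean document; each statement's English description precedes it below -/
import Mathlib

section
/- Let K ≥ 1, let S^1, …, S^K be nonempty finite strategy sets with Σ_k (|S^k| − 1) > 0, let M^k : ∏_j S^j → ℝ be payoff functions, let m ≥ 2 be the population size, and let α ≥ 0 be the ranking-intensity. Define, for strategies σ, τ ∈ S^k and opponent profile s^{−k}, the fixation probability ρ^k_{σ,τ}(s^{−k}) = (1 + Σ_{l=1}^{m−1} e^{−l·α·(M^k(τ, s^{−k}) − M^k(σ, s^{−k}))})^{−1}, set η = 1/Σ_k(|S^k| − 1), and define the matrix C indexed by pure strategy profiles s_i, s_j ∈ ∏_k S^k by: C_{ij} = η·ρ^k_{s_i^k, s_j^k}(s_i^{−k}) if s_i and s_j differ in exactly the k-th coordinate; C_{ii} = 1 − Σ_{j ≠ i} C_{ij}; and C_{ij} = 0 otherwise. Then C is a row-stochastic matrix with nonnegative entries, C is irreducible (for every pair of profiles i, j there exists n ≥ 0 with (C^n)_{ij} > 0), and there exists a unique probability vector π (π_i ≥ 0, Σ_i π_i = 1) satisfying π^T C = π^T. -/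
set_option linter.unusedSectionVars false

open Finset Matrix

section aux
variable {ι : Type} [Fintype ι] [DecidableEq ι] {C : Matrix ι ι ℝ}

lemma aux_pow_nonneg (h : ∀ s t, 0 ≤ C s t) : ∀ n s t, 0 ≤ (C ^ n) s t := by
  intro n
  induction n with
  | zero =>
    intro s t
    rw [pow_zero, Matrix.one_apply]
    split_ifs <;> norm_num
  | succ n ih =>
    intro s t
    rw [pow_succ, Matrix.mul_apply]
    exact Finset.sum_nonneg fun u _ => mul_nonneg (ih s u) (h u t)

lemma aux_vecMul_pow {v : ι → ℝ} (hv : v ᵥ* C = v) : ∀ n, v ᵥ* (C ^ n) = v := by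
  intro n
  induction n with
  | zero => simp [Matrix.vecMul_one]
  | succ n ih => rw [pow_succ, ← Matrix.vecMul_vecMul, ih, hv]

lemma aux_stat_pos (hnn : ∀ s t, 0 ≤ C s t)
    (hirr : ∀ s t, ∃ n, 0 < (C ^ n) s t) {v : ι → ℝ}
    (hv : v ᵥ* C = v) (hv0 : ∀ s, 0 ≤ v s) {s0 : ι} (hs0 : 0 < v s0) :
    ∀ t, 0 < v t := by
  intro t
  obtain ⟨n, hn⟩ := hirr s0 t
  have h1 := aux_vecMul_pow hv n
  have h2 : v t = ∑ s, v s * (C ^ n) s t := by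
    conv_lhs => rw [← h1]
    simp [Matrix.vecMul, dotProduct]
  rw [h2]
  have h3 : v s0 * (C ^ n) s0 t ≤ ∑ s, v s * (C ^ n) s t :=
    Finset.single_le_sum (f := fun s => v s * (C ^ n) s t)
      (fun s _ => mul_nonneg (hv0 s) (aux_pow_nonneg hnn n s t)) (mem_univ s0)
  exact lt_of_lt_of_le (mul_pos hs0 hn) h3

lemma aux_posPart_stat (hnn : ∀ s t, 0 ≤ C s t) (hrow : ∀ s, ∑ t, C s t = 1)
    {v : ι → ℝ} (hv : ∀ t, ∑ s, v s * C s t = v t) :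
    ∀ t, ∑ s, max (v s) 0 * C s t = max (v t) 0 := by
  have hle : ∀ t ∈ (univ : Finset ι), max (v t) 0 ≤ ∑ s, max (v s) 0 * C s t := by
    intro t _
    apply max_le
    · rw [← hv t]
      exact Finset.sum_le_sum fun s _ =>
        mul_le_mul_of_nonneg_right (le_max_left _ _) (hnn s t)
    · exact Finset.sum_nonneg fun s _ => mul_nonneg (le_max_right _ _) (hnn s t)
  have hsum : ∑ t, max (v t) 0 = ∑ t, ∑ s, max (v s) 0 * C s t := by
    rw [Finset.sum_comm]
    congr 1
    funext s
    rw [← Finset.mul_sum, hrow s, mul_one]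
  intro t
  exact ((Finset.sum_eq_sum_iff_of_le hle).mp hsum t (mem_univ t)).symm

lemma aux_key (hnn : ∀ s t, 0 ≤ C s t) (hrow : ∀ s, ∑ t, C s t = 1)
    (hirr : ∀ s t, ∃ n, 0 < (C ^ n) s t)
    {v : ι → ℝ} (hv : ∀ t, ∑ s, v s * C s t = v t) {s1 : ι} (hs1 : 0 < v s1) :
    ∀ t, 0 < v t := by
  have hpp := aux_posPart_stat hnn hrow hv
  have hvm : (fun s => max (v s) 0) ᵥ* C = fun s => max (v s) 0 :=
    funext fun t => by simpa [Matrix.vecMul, dotProduct] using hpp t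
  have hall := aux_stat_pos hnn hirr hvm (fun s => le_max_right _ _)
    (s0 := s1) (lt_max_iff.mpr (Or.inl hs1))
  intro t
  have h := hall t
  by_contra hle
  push_neg at hle
  rw [max_eq_right hle] at h
  exact lt_irrefl 0 h

lemma aux_sign (hnn : ∀ s t, 0 ≤ C s t) (hrow : ∀ s, ∑ t, C s t = 1)
    (hirr : ∀ s t, ∃ n, 0 < (C ^ n) s t)
    {v : ι → ℝ} (hv : ∀ t, ∑ s, v s * C s t = v t) {s1 : ι} (hs1 : v s1 ≠ 0) :
    (∀ t, 0 < v t) ∨ (∀ t, v t < 0) := by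
  by_cases hp : ∃ s, 0 < v s
  · obtain ⟨s, hs⟩ := hp
    exact Or.inl (aux_key hnn hrow hirr hv hs)
  · push_neg at hp
    right
    have hvneg : ∀ t, ∑ s, (-v) s * C s t = (-v) t := by
      intro t
      simp only [Pi.neg_apply, neg_mul, Finset.sum_neg_distrib]
      rw [hv t]
    have hs1' : 0 < (-v) s1 := by
      have := lt_of_le_of_ne (hp s1) hs1
      simpa using this
    have := aux_key hnn hrow hirr hvneg hs1'
    intro t
    have h := this t
    simp only [Pi.neg_apply] at h
    linarith

end aux

/-- The generalized multi-population discrete-time macro-model: the Markov transition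
matrix `C` over pure strategy profiles, built from the Fermi fixation probabilities
`ρ^k_{σ,τ}(s^{−k}) = (1 + Σ_{l=1}^{m−1} e^{−l·α·(M^k(τ,s^{−k}) − M^k(σ,s^{−k}))})⁻¹`
with `η = 1/Σ_k(|S^k|−1)`, is row-stochastic with nonnegative entries, irreducible,
and admits a unique stationary probability distribution `π` with `πᵀC = πᵀ`. -/
theorem macro_model_unique_stationary_distribution
    {K : ℕ} (hK : 1 ≤ K) (S : Fin K → Type)
    [∀ k, Fintype (S k)] [∀ k, DecidableEq (S k)] [∀ k, Nonempty (S k)]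
    (M : ∀ k : Fin K, (∀ j, S j) → ℝ)
    (m : ℕ) (hm : 2 ≤ m) (α : ℝ) (hα : 0 ≤ α)
    (hpos : 0 < ∑ k, (Fintype.card (S k) - 1))
    (η : ℝ) (hη : η = 1 / ((∑ k, (Fintype.card (S k) - 1) : ℕ) : ℝ))
    (C : Matrix (∀ k, S k) (∀ k, S k) ℝ)
    (hCoff : ∀ (s t : ∀ k, S k) (k : Fin K), s k ≠ t k → (∀ l, l ≠ k → s l = t l) →
      C s t = η * (1 + ∑ l ∈ Finset.Icc 1 (m - 1),
        Real.exp (-(l : ℝ) * α *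
          (M k (Function.update s k (t k)) - M k s)))⁻¹)
    (hCdiag : ∀ s : ∀ k, S k, C s s = 1 - ∑ t ∈ Finset.univ.erase s, C s t)
    (hCzero : ∀ s t : ∀ k, S k, s ≠ t →
      ¬ (∃ k : Fin K, s k ≠ t k ∧ ∀ l, l ≠ k → s l = t l) → C s t = 0) :
    (∀ s t : ∀ k, S k, 0 ≤ C s t) ∧
    (∀ s : ∀ k, S k, ∑ t, C s t = 1) ∧
    (∀ s t : ∀ k, S k, ∃ n : ℕ, 0 < (C ^ n) s t) ∧
    (∃! π : (∀ k, S k) → ℝ,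
      (∀ s, 0 ≤ π s) ∧ (∑ s, π s = 1) ∧ ∀ t, ∑ s, π s * C s t = π t) := by
  classical
  -- basic facts
  set T : ℕ := ∑ k, (Fintype.card (S k) - 1) with hT
  have hT1 : 1 ≤ T := hpos
  have hTpos : (0 : ℝ) < (T : ℝ) := by exact_mod_cast hpos
  have hηpos : 0 < η := by
    rw [hη]; positivity
  have hTη : (T : ℝ) * η = 1 := by
    rw [hη]; field_simp
  -- off-diagonal adjacent entries are in (0, η)
  have h1 : ∀ s t : ∀ k, S k,
      (∃ k : Fin K, s k ≠ t k ∧ ∀ l, l ≠ k → s l = t l) → 0 < C s t ∧ C s t < η := by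
    rintro s t ⟨k, hk, hl⟩
    rw [hCoff s t k hk hl]
    set E := ∑ l ∈ Finset.Icc 1 (m - 1),
      Real.exp (-(l : ℝ) * α * (M k (Function.update s k (t k)) - M k s)) with hE
    have hEpos : 0 < E := by
      apply Finset.sum_pos (fun _ _ => Real.exp_pos _)
      exact Finset.nonempty_Icc.mpr (by omega)
    have h1E : (0 : ℝ) < 1 + E := by linarith
    constructor
    · exact mul_pos hηpos (inv_pos.mpr h1E)
    · have hinv : (1 + E)⁻¹ < 1 := by
        rw [inv_lt_one_iff₀]; right; linarith
      calc η * (1 + E)⁻¹ < η * 1 := by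
            exact mul_lt_mul_of_pos_left hinv hηpos
        _ = η := mul_one η
  -- off-diagonal entries nonneg
  have h2 : ∀ s t : ∀ k, S k, s ≠ t → 0 ≤ C s t := by
    intro s t hst
    by_cases hr : ∃ k : Fin K, s k ≠ t k ∧ ∀ l, l ≠ k → s l = t l
    · exact (h1 s t hr).1.le
    · rw [hCzero s t hst hr]
  -- off-diagonal row sums are < 1
  have h3 : ∀ s : ∀ k, S k, ∑ t ∈ Finset.univ.erase s, C s t < 1 := by
    intro s
    set N : Finset (∀ k, S k) := (Finset.univ.erase s).filter
      (fun t => ∃ k : Fin K, s k ≠ t k ∧ ∀ l, l ≠ k → s l = t l) with hN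
    have hsum : ∑ t ∈ Finset.univ.erase s, C s t = ∑ t ∈ N, C s t := by
      rw [hN]
      refine (Finset.sum_filter_of_ne ?_).symm
      intro t ht hne
      by_contra hr
      exact hne (hCzero s t (fun h => (Finset.mem_erase.mp ht).1 h.symm) hr)
    -- N is nonempty
    have hNne : N.Nonempty := by
      have : ∃ k, 0 < Fintype.card (S k) - 1 := by
        by_contra hc
        push_neg at hc
        have : T = 0 := Finset.sum_eq_zero fun k _ => Nat.le_zero.mp (hc k)
        omega
      obtain ⟨k, hk⟩ := this
      have hcard : 1 < Fintype.card (S k) := by omega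
      obtain ⟨σ, hσ⟩ := Fintype.exists_ne_of_one_lt_card hcard (s k)
      refine ⟨Function.update s k σ, ?_⟩
      rw [hN, Finset.mem_filter, Finset.mem_erase]
      refine ⟨⟨?_, Finset.mem_univ _⟩, k, ?_, ?_⟩
      · intro h
        exact hσ (by rw [← h, Function.update_self])
      · rw [Function.update_self]; exact fun h => hσ h.symm
      · intro l hl; rw [Function.update_of_ne hl]
    -- card N ≤ T
    have hcardN : N.card ≤ T := by
      set B : Finset (Σ k : Fin K, S k) :=
        Finset.univ.sigma (fun k => Finset.univ.erase (s k)) with hB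
      have hcardB : B.card = T := by
        rw [hB, Finset.card_sigma]
        refine Finset.sum_congr rfl fun k _ => ?_
        rw [Finset.card_erase_of_mem (Finset.mem_univ _), Finset.card_univ]
      have hsub : N ⊆ B.image (fun p => Function.update s p.1 p.2) := by
        intro t ht
        rw [hN, Finset.mem_filter] at ht
        obtain ⟨-, k, hk, hl⟩ := ht
        refine Finset.mem_image.mpr ⟨⟨k, t k⟩, ?_, ?_⟩
        · rw [hB, Finset.mem_sigma]
          exact ⟨Finset.mem_univ _, Finset.mem_erase.mpr ⟨fun h => hk h.symm, Finset.mem_univ _⟩⟩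
        · funext l
          by_cases hlk : l = k
          · subst hlk; rw [Function.update_self]
          · rw [Function.update_of_ne hlk]; exact hl l hlk
      calc N.card ≤ (B.image (fun p => Function.update s p.1 p.2)).card :=
            Finset.card_le_card hsub
        _ ≤ B.card := Finset.card_image_le
        _ = T := hcardB
    rw [hsum]
    calc ∑ t ∈ N, C s t < ∑ t ∈ N, η := by
          refine Finset.sum_lt_sum_of_nonempty hNne fun t ht => ?_
          rw [hN, Finset.mem_filter] at ht
          exact (h1 s t ht.2).2
      _ = (N.card : ℝ) * η := by rw [Finset.sum_const, nsmul_eq_mul]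
      _ ≤ (T : ℝ) * η := by
          exact mul_le_mul_of_nonneg_right (by exact_mod_cast hcardN) hηpos.le
      _ = 1 := hTη
  -- nonnegativity
  have hnn : ∀ s t : ∀ k, S k, 0 ≤ C s t := by
    intro s t
    by_cases hst : s = t
    · subst hst
      rw [hCdiag s]
      linarith [h3 s]
    · exact h2 s t hst
  -- row sums
  have hrow : ∀ s : ∀ k, S k, ∑ t, C s t = 1 := by
    intro s
    rw [← Finset.add_sum_erase _ _ (Finset.mem_univ s), hCdiag s]
    ring
  -- irreducibility
  have hirr : ∀ s t : ∀ k, S k, ∃ n : ℕ, 0 < (C ^ n) s t := by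
    have key : ∀ d : ℕ, ∀ s t : ∀ k, S k,
        (Finset.univ.filter fun k => s k ≠ t k).card = d → ∃ n : ℕ, 0 < (C ^ n) s t := by
      intro d
      induction d with
      | zero =>
        intro s t hd
        have hst : s = t := by
          funext k
          by_contra hk
          have : k ∈ Finset.univ.filter fun k => s k ≠ t k :=
            Finset.mem_filter.mpr ⟨Finset.mem_univ _, hk⟩
          rw [Finset.card_eq_zero.mp hd] at this
          exact absurd this (Finset.notMem_empty _)
        subst hst
        exact ⟨0, by rw [pow_zero, Matrix.one_apply_eq]; norm_num⟩
      | succ d ih =>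
        intro s t hd
        have hne : (Finset.univ.filter fun k => s k ≠ t k).Nonempty :=
          Finset.card_pos.mp (by omega)
        obtain ⟨k, hk⟩ := hne
        have hk' : s k ≠ t k := (Finset.mem_filter.mp hk).2
        set s' := Function.update s k (t k) with hs'
        have hCss' : 0 < C s s' := by
          refine (h1 s s' ⟨k, ?_, ?_⟩).1
          · rw [hs', Function.update_self]; exact hk'
          · intro l hl; rw [hs', Function.update_of_ne hl]
        have hfilt : (Finset.univ.filter fun l => s' l ≠ t l)
            = (Finset.univ.filter fun l => s l ≠ t l).erase k := by
          ext l
          by_cases hlk : l = k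
          · subst hlk
            simp [hs', Function.update_self]
          · simp [Finset.mem_erase, hlk, hs', Function.update_of_ne hlk]
        have hd' : (Finset.univ.filter fun l => s' l ≠ t l).card = d := by
          rw [hfilt, Finset.card_erase_of_mem hk, hd]; omega
        obtain ⟨n, hn⟩ := ih s' t hd'
        refine ⟨n + 1, ?_⟩
        rw [pow_succ', Matrix.mul_apply]
        refine Finset.sum_pos' (fun u _ => mul_nonneg (hnn s u) (aux_pow_nonneg hnn n u t))
          ⟨s', Finset.mem_univ _, mul_pos hCss' hn⟩
    intro s t
    exact key _ s t rfl
  -- existence of a stationary vector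
  have hones : (C - 1).mulVec (fun _ => (1 : ℝ)) = 0 := by
    funext s
    simp only [Matrix.mulVec, dotProduct, mul_one, Pi.zero_apply,
      Matrix.sub_apply, Matrix.one_apply, Finset.sum_sub_distrib,
      Finset.sum_ite_eq, Finset.mem_univ, if_true]
    rw [hrow s]
    ring
  have hdet : (C - 1).det = 0 := by
    refine Matrix.exists_mulVec_eq_zero_iff.mp ⟨fun _ => (1 : ℝ), ?_, hones⟩
    intro h
    have := congrFun h (Classical.arbitrary _)
    norm_num at this
  obtain ⟨w, hw0, hw⟩ := Matrix.exists_vecMul_eq_zero_iff.mpr hdet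
  have hwstat : ∀ t, ∑ s, w s * C s t = w t := by
    intro t
    have h := congrFun hw t
    simp only [Matrix.vecMul, dotProduct, Matrix.sub_apply, Matrix.one_apply,
      Pi.zero_apply, mul_sub, Finset.sum_sub_distrib, mul_ite, mul_one, mul_zero,
      Finset.sum_ite_eq', Finset.mem_univ, if_true] at h
    linarith
  obtain ⟨s1, hs1⟩ := Function.ne_iff.mp hw0
  have hs1' : w s1 ≠ 0 := by simpa using hs1
  have hsign := aux_sign hnn hrow hirr hwstat hs1'
  set c : ℝ := ∑ s, w s with hc
  have huniv : (Finset.univ : Finset (∀ k, S k)).Nonempty := Finset.univ_nonempty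
  have hπpos : ∀ s, 0 < w s / c := by
    rcases hsign with hpos' | hneg'
    · have hcpos : 0 < c := Finset.sum_pos (fun s _ => hpos' s) huniv
      exact fun s => div_pos (hpos' s) hcpos
    · have hcneg : c < 0 := by
        have : ∑ s, w s < ∑ s : (∀ k, S k), (0 : ℝ) :=
          Finset.sum_lt_sum_of_nonempty huniv (fun s _ => hneg' s)
        simpa using this
      exact fun s => div_pos_of_neg_of_neg (hneg' s) hcneg
  have hdivstat : ∀ t, ∑ s, w s / c * C s t = w t / c := by
    intro t
    rw [← hwstat t, Finset.sum_div]
    exact Finset.sum_congr rfl fun s _ => div_mul_eq_mul_div _ _ _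
  have hcne : c ≠ 0 := by
    intro h
    have := hπpos s1
    rw [h, div_zero] at this
    exact lt_irrefl 0 this
  refine ⟨hnn, hrow, hirr, ⟨fun s => w s / c, ⟨fun s => (hπpos s).le, ?_, ?_⟩, ?_⟩⟩
  · rw [← Finset.sum_div, ← hc, div_self hcne]
  · intro t
    exact hdivstat t
  · -- uniqueness
    rintro y ⟨hy0, hy1, hystat⟩
    have hδstat : ∀ t, ∑ s, (y s - w s / c) * C s t = y t - w t / c := by
      intro t
      simp only [sub_mul, Finset.sum_sub_distrib]
      rw [hystat t, hdivstat t]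
    have hδsum : ∑ s, (y s - w s / c) = 0 := by
      rw [Finset.sum_sub_distrib, hy1, ← Finset.sum_div, ← hc, div_self hcne, sub_self]
    funext s
    by_contra hne
    have hne' : y s - w s / c ≠ 0 := sub_ne_zero.mpr hne
    rcases aux_sign hnn hrow hirr hδstat hne' with hpos' | hneg'
    · have : (0 : ℝ) < ∑ s, (y s - w s / c) :=
        Finset.sum_pos (fun s _ => hpos' s) huniv
      rw [hδsum] at this
      exact lt_irrefl 0 this
    · have : ∑ s, (y s - w s / c) < ∑ s : (∀ k, S k), (0 : ℝ) :=
        Finset.sum_lt_sum_of_nonempty huniv (fun s _ => hneg' s)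
      rw [hδsum] at this
      simp at this
end

section
/- Let K ≥ 1, let S^1, …, S^K be nonempty finite strategy sets with Σ_k (|S^k| − 1) > 0, let M^k : ∏_j S^j → ℝ be payoff functions, let m ≥ 2, η = 1/Σ_k(|S^k| − 1), and for α > 0 let C(α) be the transition matrix of the macro-model: C(α)_{ij} = η·(1 + Σ_{l=1}^{m−1} e^{−l·α·(M^k(s_j^k, s_i^{−k}) − M^k(s_i^k, s_i^{−k}))})^{−1} when profiles s_i ≠ s_j differ in exactly the k-th coordinate, C(α)_{ii} = 1 − Σ_{j≠i} C(α)_{ij}, and 0 otherwise. Then for any two profiles s_i ≠ s_j differing in exactly the k-th coordinate: lim_{α→∞} C(α)_{ij} = η if M^k(s_j^k, s_i^{−k}) > M^k(s_i^k, s_i^{−k}); lim_{α→∞} C(α)_{ij} = η/m if M^k(s_j^k, s_i^{−k}) = M^k(s_i^k, s_i^{−k}); and lim_{α→∞} C(α)_{ij} = 0 if M^k(s_j^k, s_i^{−k}) < M^k(s_i^k, s_i^{−k}). -/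
open Filter

/-- In the limit of infinite ranking-intensity `α`, the off-diagonal entries of the
macro-model transition matrix (for two profiles `s ≠ t` differing exactly in the
`k`-th coordinate) converge to: `η` if the deviation is strictly improving,
`η/m` if the two payoffs are equal, and `0` if the deviation is strictly worse. -/
theorem macro_model_limit_coincides_with_MCC
    {K : ℕ} (hK : 1 ≤ K) (S : Fin K → Type)
    [∀ k, Fintype (S k)] [∀ k, DecidableEq (S k)] [∀ k, Nonempty (S k)]
    (M : ∀ k : Fin K, (∀ j, S j) → ℝ)
    (m : ℕ) (hm : 2 ≤ m)
    (hpos : 0 < ∑ k, (Fintype.card (S k) - 1))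
    (η : ℝ) (hη : η = 1 / ((∑ k, (Fintype.card (S k) - 1) : ℕ) : ℝ))
    (s t : ∀ k, S k) (k : Fin K)
    (hk : s k ≠ t k) (hoff : ∀ l, l ≠ k → s l = t l) :
    (M k s < M k (Function.update s k (t k)) →
      Tendsto (fun α : ℝ => η * (1 + ∑ l ∈ Finset.Icc 1 (m - 1),
          Real.exp (-(l : ℝ) * α * (M k (Function.update s k (t k)) - M k s)))⁻¹)
        atTop (nhds η)) ∧
    (M k (Function.update s k (t k)) = M k s →
      Tendsto (fun α : ℝ => η * (1 + ∑ l ∈ Finset.Icc 1 (m - 1),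
          Real.exp (-(l : ℝ) * α * (M k (Function.update s k (t k)) - M k s)))⁻¹)
        atTop (nhds (η / (m : ℝ)))) ∧
    (M k (Function.update s k (t k)) < M k s →
      Tendsto (fun α : ℝ => η * (1 + ∑ l ∈ Finset.Icc 1 (m - 1),
          Real.exp (-(l : ℝ) * α * (M k (Function.update s k (t k)) - M k s)))⁻¹)
        atTop (nhds 0)) := by
  set d : ℝ := M k (Function.update s k (t k)) - M k s with hd
  refine ⟨?_, ?_, ?_⟩
  · intro h
    have hdpos : 0 < d := sub_pos.mpr h
    have hsum : Tendsto (fun α : ℝ => ∑ l ∈ Finset.Icc 1 (m - 1),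
        Real.exp (-(l : ℝ) * α * d)) atTop (nhds 0) := by
      have : Tendsto (fun α : ℝ => ∑ l ∈ Finset.Icc 1 (m - 1),
          Real.exp (-(l : ℝ) * α * d)) atTop (nhds (∑ l ∈ Finset.Icc 1 (m - 1), (0:ℝ))) := by
        refine tendsto_finset_sum _ fun l hl => ?_
        have hl1 : 1 ≤ l := (Finset.mem_Icc.mp hl).1
        have hc : (-(l : ℝ)) * d < 0 := by
          have : (0:ℝ) < (l : ℝ) := by exact_mod_cast hl1
          nlinarith
        have hexp : Tendsto (fun α : ℝ => α * ((-(l : ℝ)) * d)) atTop atBot :=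
          (tendsto_id (α := ℝ)).atTop_mul_const_of_neg hc
        have := Real.tendsto_exp_atBot.comp hexp
        refine this.congr fun α => ?_
        simp only [Function.comp, id_eq]
        ring_nf
      simpa using this
    have h1 : Tendsto (fun α : ℝ => (1 + ∑ l ∈ Finset.Icc 1 (m - 1),
        Real.exp (-(l : ℝ) * α * d))⁻¹) atTop (nhds 1) := by
      have := ((tendsto_const_nhds (x := (1:ℝ)) (f := atTop)).add hsum).inv₀ (by norm_num)
      simpa using this
    have := h1.const_mul η
    simpa using this
  · intro h
    have hd0 : d = 0 := by rw [hd, h]; ring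
    have hcard : (Finset.Icc 1 (m - 1)).card = m - 1 := by simp [Nat.card_Icc]
    have hconst : ∀ α : ℝ, η * (1 + ∑ l ∈ Finset.Icc 1 (m - 1),
        Real.exp (-(l : ℝ) * α * d))⁻¹ = η / (m : ℝ) := by
      intro α
      have hsum : ∑ l ∈ Finset.Icc 1 (m - 1), Real.exp (-(l : ℝ) * α * d)
          = ((m : ℝ) - 1) := by
        rw [Finset.sum_congr rfl fun l _ => by rw [hd0, mul_zero, Real.exp_zero]]
        rw [Finset.sum_const, hcard, nsmul_eq_mul, mul_one]
        push_cast [Nat.cast_sub (by omega : 1 ≤ m)]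
        ring
      rw [hsum, show (1:ℝ) + ((m:ℝ) - 1) = (m : ℝ) by ring, div_eq_mul_inv]
    exact tendsto_const_nhds.congr fun α => (hconst α).symm
  · intro h
    have hdneg : d < 0 := sub_neg.mpr h
    have hsum : Tendsto (fun α : ℝ => 1 + ∑ l ∈ Finset.Icc 1 (m - 1),
        Real.exp (-(l : ℝ) * α * d)) atTop atTop := by
      have hone : Tendsto (fun α : ℝ => Real.exp (-(1 : ℝ) * α * d)) atTop atTop := by
        have hc : (0:ℝ) < (-(1:ℝ)) * d := by nlinarith
        have hlin : Tendsto (fun α : ℝ => (-(1:ℝ)) * d * α) atTop atTop :=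
          (tendsto_id (α := ℝ)).const_mul_atTop hc
        refine (Real.tendsto_exp_atTop.comp hlin).congr fun α => ?_
        simp only [Function.comp]; ring_nf
      refine tendsto_atTop_mono (fun α => ?_) (tendsto_atTop_add_const_left _ 1 hone)
      have h1mem : 1 ∈ Finset.Icc 1 (m - 1) := Finset.mem_Icc.mpr ⟨le_refl _, by omega⟩
      have := Finset.single_le_sum (f := fun l : ℕ => Real.exp (-(l : ℝ) * α * d))
        (fun l _ => (Real.exp_pos _).le) h1mem
      simp only [Nat.cast_one] at this
      linarith
    have := hsum.inv_tendsto_atTop.const_mul η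
    simpa using this
end

section
/- Let K ≥ 1, let S^1, …, S^K be nonempty finite strategy sets, and let M^k : ∏_j S^j → ℝ be payoff functions. If a sink strongly connected component of the response graph of the game is a singleton {s}, then s is a pure Nash equilibrium; indeed it is a strict pure Nash equilibrium: for every player k and every s'^k ∈ S^k with s'^k ≠ s^k, M^k(s'^k, s^{−k}) < M^k(s^k, s^{−k}). -/
/-- The response graph of the game: a directed edge from `s` to `t` whenever `t`
differs from `s` in the strategy of exactly one player `k` and is a weakly better
response for that player. -/
def RespEdge {K : ℕ} {S : Fin K → Type}
    (M : ∀ k : Fin K, (∀ j, S j) → ℝ) (s t : ∀ j, S j) : Prop :=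
  ∃ k : Fin K, s k ≠ t k ∧ (∀ l, l ≠ k → s l = t l) ∧ M k s ≤ M k t

/-- A strongly connected component of the response graph: the set of all vertices
mutually reachable (by directed paths) from some vertex `s`. -/
def IsSCC {K : ℕ} {S : Fin K → Type}
    (M : ∀ k : Fin K, (∀ j, S j) → ℝ) (A : Set (∀ j, S j)) : Prop :=
  ∃ s : ∀ j, S j, A = {t | Relation.ReflTransGen (RespEdge M) s t ∧
    Relation.ReflTransGen (RespEdge M) t s}

/-- A sink strongly connected component of the response graph: a strongly connected
component with no out-going edges. -/
def IsSinkSCC {K : ℕ} {S : Fin K → Type}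
    (M : ∀ k : Fin K, (∀ j, S j) → ℝ) (A : Set (∀ j, S j)) : Prop :=
  IsSCC M A ∧ ∀ s ∈ A, ∀ t : ∀ j, S j, RespEdge M s t → t ∈ A

/-- If a sink strongly connected component of the response graph is a singleton `{s}`,
then `s` is a strict pure Nash equilibrium: every unilateral deviation of any player
strictly decreases that player's payoff. -/
theorem singleton_sink_scc_is_strict_nash
    {K : ℕ} (hK : 1 ≤ K) (S : Fin K → Type)
    [∀ k, Fintype (S k)] [∀ k, DecidableEq (S k)] [∀ k, Nonempty (S k)]
    (M : ∀ k : Fin K, (∀ j, S j) → ℝ)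
    (s : ∀ j, S j) (h : IsSinkSCC M {s}) :
    ∀ (k : Fin K) (i : S k), i ≠ s k →
      M k (Function.update s k i) < M k s := by
  intro k i hi
  by_contra hlt
  push_neg at hlt
  have hedge : RespEdge M s (Function.update s k i) := by
    refine ⟨k, ?_, ?_, ?_⟩
    · simpa using hi.symm
    · intro l hl; simp [Function.update_of_ne hl]
    · exact hlt
  have := h.2 s rfl _ hedge
  have : Function.update s k i = s := this
  exact hi (by simpa using congrFun this k)
end

section
/- Let K ≥ 1, let S^1, …, S^K be nonempty finite strategy sets, let M^k : ∏_j S^j → ℝ be payoff functions, and let φ be a flow on the product of probability simplices X = ∏_k Δ(S^k) such that for every x ∈ X the trajectory t ↦ φ(t,x) is differentiable and satisfies the K-population replicator equations. If a sink chain component of φ contains a pure strategy profile s_i (viewed as a vertex of X), then it contains every pure strategy profile s_j reachable from s_i by a directed path in the response graph of the game; in particular, it contains all the pure strategy profiles of at least one Markov-Conley chain (sink strongly connected component of the response graph). -/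
/-- A flow on a metric space `X`: a continuous map `φ : ℝ × X → X` with
`φ 0 x = x` and `φ (s+t) x = φ s (φ t x)` (hence each `φ t` is a homeomorphism,
with inverse `φ (−t)`). -/
structure IsFlow {X : Type*} [MetricSpace X] (φ : ℝ → X → X) : Prop where
  continuous : Continuous fun p : ℝ × X => φ p.1 p.2
  map_zero : ∀ x, φ 0 x = x
  map_add : ∀ s t x, φ (s + t) x = φ s (φ t x)

/-- An `(ε,T)`-chain from `x` to `y` with respect to a flow `φ`: a finite sequence
`x = x₀, x₁, …, xₙ = y` (`n ≥ 1`) and times `t₀, …, t_{n−1} ∈ [T,∞)` with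
`dist (φ tᵢ xᵢ) x_{i+1} < ε` for all `i < n`. -/
def IsEpsTChain {X : Type*} [MetricSpace X] (φ : ℝ → X → X) (ε T : ℝ) (x y : X) : Prop :=
  ∃ (n : ℕ) (xs : ℕ → X) (ts : ℕ → ℝ),
    1 ≤ n ∧ xs 0 = x ∧ xs n = y ∧ (∀ i < n, T ≤ ts i) ∧
    ∀ i < n, dist (φ (ts i) (xs i)) (xs (i + 1)) < ε

/-- The forward chain limit set `Ω⁺(φ, x)`: the set of points `y` such that for every
`ε > 0` and `T > 0` there is an `(ε,T)`-chain from `x` to `y`. -/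
def forwardChainLimit {X : Type*} [MetricSpace X] (φ : ℝ → X → X) (x : X) : Set X :=
  {y | ∀ ε > (0 : ℝ), ∀ T > (0 : ℝ), IsEpsTChain φ ε T x y}

/-- Two points are chain equivalent if each lies in the forward chain limit set of
the other. -/
def ChainEquiv {X : Type*} [MetricSpace X] (φ : ℝ → X → X) (x y : X) : Prop :=
  y ∈ forwardChainLimit φ x ∧ x ∈ forwardChainLimit φ y

/-- The chain recurrent set `R(φ)`: points chain equivalent to themselves. -/
def chainRecurrentSet {X : Type*} [MetricSpace X] (φ : ℝ → X → X) : Set X :=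
  {x | ChainEquiv φ x x}

/-- The chain components of `φ`: the equivalence classes of the chain equivalence
relation on the chain recurrent set `R(φ)`. -/
def IsChainComponent {X : Type*} [MetricSpace X] (φ : ℝ → X → X) (A : Set X) : Prop :=
  ∃ x ∈ chainRecurrentSet φ, A = {y ∈ chainRecurrentSet φ | ChainEquiv φ x y}

/-- The reachability relation on chain components: `A₁ ≤_C A₂` iff there exist
`x ∈ A₂` and `y ∈ A₁` with `y ∈ Ω⁺(φ, x)`. -/
def ccLE {X : Type*} [MetricSpace X] (φ : ℝ → X → X) (A₁ A₂ : Set X) : Prop :=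
  ∃ x ∈ A₂, ∃ y ∈ A₁, y ∈ forwardChainLimit φ x

/-- Fitness of pure strategy `i ∈ S^k` at mixed state `x`:
`f^k_i(x) = Σ_{s^{−k}} M^k(i, s^{−k}) · ∏_{c ≠ k} x^c_{s^c}`, encoded as a sum over
full profiles whose `k`-th coordinate is `i`. -/
def fitness {K : ℕ} {S : Fin K → Type} [∀ k, Fintype (S k)] [∀ k, DecidableEq (S k)]
    (M : ∀ k : Fin K, (∀ j, S j) → ℝ) (k : Fin K) (i : S k) (x : ∀ k, S k → ℝ) : ℝ :=
  ∑ s' : ∀ j, S j,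
    if s' k = i then M k s' * ∏ c ∈ Finset.univ.erase k, x c (s' c) else 0

/-- The product of probability simplices `X = ∏_k Δ(S^k)`: mixed strategy profiles
of the K populations. -/
abbrev SimplexProd {K : ℕ} (S : Fin K → Type) [∀ k, Fintype (S k)] : Type :=
  {x : ∀ k, S k → ℝ // (∀ k i, 0 ≤ x k i) ∧ ∀ k, ∑ i, x k i = 1}

/-- The vertex of `∏_k Δ(S^k)` corresponding to a pure strategy profile `s`,
assigning probability 1 to `s^k` in each population `k`. -/
def vertex {K : ℕ} (S : Fin K → Type) [∀ k, Fintype (S k)] [∀ k, DecidableEq (S k)]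
    (s : ∀ k, S k) : SimplexProd S :=
  ⟨fun c j => if j = s c then 1 else 0,
    fun k i => by dsimp only; split <;> norm_num,
    fun k => by simp⟩

/-- A sink chain component: a chain component `A` such that no other chain component
`B ≠ A` satisfies `B ≤_C A`. -/
def IsSinkChainComponent {X : Type*} [MetricSpace X] (φ : ℝ → X → X) (A : Set X) : Prop :=
  IsChainComponent φ A ∧ ∀ B : Set X, IsChainComponent φ B → B ≠ A → ¬ ccLE φ B A

/-!
Pure profiles are rest points of the replicator flow (extinct strategies stay extinct, by
Grönwall), hence chain recurrent. Let `s → t` be an edge of the response graph, player `k`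
switching to a weakly better strategy. The segment joining the two vertices is invariant, and on
it the weight `ν` of `t k` obeys `ν' = ν (1 - ν) (M k t - M k s) ≥ 0`. Alternating the flow for
time `T` with jumps of size `ε / 2` along the segment therefore gives an `(ε, T)`-chain from `s`
to `t`, so `t ∈ Ω⁺(s)`, and a sink chain component containing `s` must contain `t`. Finally, in
the finite response graph every profile reaches a sink strongly connected component.
-/

namespace IsEpsTChain

variable {X : Type*} [MetricSpace X] {φ : ℝ → X → X} {ε T t : ℝ} {x y z : X}

lemma single (ht : T ≤ t) (hd : dist (φ t x) y < ε) : IsEpsTChain φ ε T x y :=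
  ⟨1, fun i => if i = 0 then x else y, fun _ => t, le_rfl, rfl, rfl, fun _ _ => ht,
    fun i hi => by rw [Nat.lt_one_iff.1 hi]; simpa using hd⟩

lemma cons (ht : T ≤ t) (hd : dist (φ t x) y < ε) (hc : IsEpsTChain φ ε T y z) :
    IsEpsTChain φ ε T x z := by
  obtain ⟨n, xs, ts, hn, h0, hz, hT, hdist⟩ := hc
  refine ⟨n + 1, fun | 0 => x | i + 1 => xs i, fun | 0 => t | i + 1 => ts i, by omega, rfl, hz,
    ?_, ?_⟩
  · rintro (_ | i) hi
    exacts [ht, hT i (by omega)]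
  · rintro (_ | i) hi
    · simpa [h0] using hd
    · exact hdist i (by omega)

end IsEpsTChain

section ChainComponents

variable {X : Type*} [MetricSpace X] {φ : ℝ → X → X} {x y : X}

lemma mem_chainRecurrentSet_of_forall_pos_map_eq (h : ∀ t > 0, φ t x = x) :
    x ∈ chainRecurrentSet φ :=
  have hx : x ∈ forwardChainLimit φ x := fun _ hε T hT =>
    .single le_rfl (by rwa [h T hT, dist_self])
  ⟨hx, hx⟩

lemma IsSinkChainComponent.mem_of_mem_forwardChainLimit {A : Set X}
    (hA : IsSinkChainComponent φ A) (hx : x ∈ A) (hy : y ∈ chainRecurrentSet φ)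
    (hxy : y ∈ forwardChainLimit φ x) : y ∈ A := by
  by_contra hyA
  let B := {z ∈ chainRecurrentSet φ | ChainEquiv φ y z}
  have hyB : y ∈ B := ⟨hy, hy⟩
  exact hA.2 B ⟨y, hy, rfl⟩ (fun hBA => hyA (hBA ▸ hyB)) ⟨x, hx, y, hyB, hxy⟩

end ChainComponents

open Relation in
lemma Relation.exists_reflTransGen_maximal {α : Type*} [Finite α] (r : α → α → Prop) (a : α) :
    ∃ b, ReflTransGen r a b ∧ ∀ c, ReflTransGen r b c → ReflTransGen r c b := by
  let above : α → α → Prop := fun c b => ReflTransGen r b c ∧ ¬ ReflTransGen r c b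
  have : IsTrans α above :=
    ⟨fun _ _ _ h₁ h₂ => ⟨h₂.1.trans h₁.1, fun h => h₁.2 (h.trans h₂.1)⟩⟩
  have : Std.Irrefl above := ⟨fun _ h => h.2 .refl⟩
  obtain ⟨b, hab, hb⟩ :=
    (Finite.wellFounded_of_trans_of_irrefl above).has_min {b | ReflTransGen r a b} ⟨a, .refl⟩
  exact ⟨b, hab, fun c hbc => by_contra fun hcb => hb c (hab.trans hbc) ⟨hbc, hcb⟩⟩

lemma isSinkSCC_of_maximal {K : ℕ} {S : Fin K → Type} {M : Fin K → (∀ j, S j) → ℝ}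
    {t : ∀ j, S j}
    (ht : ∀ u, Relation.ReflTransGen (RespEdge M) t u → Relation.ReflTransGen (RespEdge M) u t) :
    IsSinkSCC M {u | Relation.ReflTransGen (RespEdge M) t u ∧
      Relation.ReflTransGen (RespEdge M) u t} :=
  ⟨⟨t, rfl⟩, fun _ hu v huv => ⟨hu.1.tail huv, ht v (hu.1.tail huv)⟩⟩

namespace SimplexProd

variable {K : ℕ} {S : Fin K → Type} [∀ k, Fintype (S k)]

lemma le_one (z : SimplexProd S) (k : Fin K) (i : S k) : z.1 k i ≤ 1 :=
  (Finset.single_le_sum (fun j _ => z.2.1 k j) (Finset.mem_univ i)).trans_eq (z.2.2 k)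

lemma eq_one_of_forall_ne_eq_zero (z : SimplexProd S) {k : Fin K} {i : S k}
    (h : ∀ j ≠ i, z.1 k j = 0) : z.1 k i = 1 := by
  simpa [Finset.sum_eq_single i (fun j _ hj => h j hj)] using z.2.2 k

def prob (z : SimplexProd S) (k : Fin K) (i : S k) : unitInterval :=
  ⟨z.1 k i, z.2.1 k i, z.le_one k i⟩

end SimplexProd

section Fitness

variable {K : ℕ} {S : Fin K → Type} [∀ k, Fintype (S k)] [∀ k, DecidableEq (S k)]
  (M : Fin K → (∀ j, S j) → ℝ) {k : Fin K}

lemma abs_fitness_le (i : S k) (z : SimplexProd S) :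
    |fitness M k i z.1| ≤ ∑ s, |M k s| := by
  refine (Finset.abs_sum_le_sum_abs _ _).trans (Finset.sum_le_sum fun s _ => ?_)
  split_ifs
  · rw [abs_mul, abs_of_nonneg (Finset.prod_nonneg fun c _ => z.2.1 c (s c))]
    exact mul_le_of_le_one_right (abs_nonneg _)
      (Finset.prod_le_one (fun c _ => z.2.1 c (s c)) fun c _ => z.le_one c (s c))
  · simp

lemma abs_mean_fitness_le (z : SimplexProd S) :
    |∑ j, z.1 k j * fitness M k j z.1| ≤ ∑ s, |M k s| :=
  calc |∑ j, z.1 k j * fitness M k j z.1|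
      ≤ ∑ j, z.1 k j * ∑ s, |M k s| := by
        refine (Finset.abs_sum_le_sum_abs _ _).trans (Finset.sum_le_sum fun j _ => ?_)
        rw [abs_mul, abs_of_nonneg (z.2.1 k j)]
        exact mul_le_mul_of_nonneg_left (abs_fitness_le M j z) (z.2.1 k j)
    _ = ∑ s, |M k s| := by rw [← Finset.sum_mul, z.2.2 k, one_mul]

lemma fitness_of_forall_ne_eq_pure {z : ∀ k, S k → ℝ} (s : ∀ j, S j)
    (hz : ∀ c ≠ k, ∀ j, z c j = if j = s c then 1 else 0) (i : S k) :
    fitness M k i z = M k (Function.update s k i) := by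
  unfold fitness
  rw [Finset.sum_eq_single (Function.update s k i)]
  · rw [if_pos (Function.update_self k i s), Finset.prod_eq_one fun c hc => ?_, mul_one]
    rw [hz c (Finset.ne_of_mem_erase hc), Function.update_of_ne (Finset.ne_of_mem_erase hc),
      if_pos rfl]
  · intro s' _ hs'
    split_ifs with hi
    · obtain ⟨c, hck, hc⟩ : ∃ c ≠ k, s' c ≠ s c := by
        by_contra! h
        exact hs' (Function.eq_update_iff.2 ⟨hi, h⟩)
      rw [Finset.prod_eq_zero (Finset.mem_erase.2 ⟨hck, Finset.mem_univ c⟩)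
        (by rw [hz c hck, if_neg hc]), mul_zero]
    · rfl
  · simp

end Fitness

section Edge

variable {K : ℕ} {S : Fin K → Type} [∀ k, Fintype (S k)] [∀ k, DecidableEq (S k)]

def edgePoint (s t : ∀ j, S j) (μ : unitInterval) : SimplexProd S :=
  ⟨fun c j => (1 - μ) * (if j = s c then 1 else 0) + μ * (if j = t c then 1 else 0),
    fun c j => add_nonneg
      (mul_nonneg (unitInterval.one_minus_nonneg μ) (by split_ifs <;> norm_num))
      (mul_nonneg (unitInterval.nonneg μ) (by split_ifs <;> norm_num)),
    fun c => by simp [Finset.sum_add_distrib]⟩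

variable {s t : ∀ j, S j}

lemma edgePoint_zero : edgePoint s t 0 = vertex S s := by
  ext c j
  simp [edgePoint, vertex]

lemma edgePoint_one : edgePoint s t 1 = vertex S t := by
  ext c j
  simp [edgePoint, vertex]

lemma dist_edgePoint_le (μ ν : unitInterval) :
    dist (edgePoint s t μ) (edgePoint s t ν) ≤ dist μ ν := by
  refine (dist_pi_le_iff dist_nonneg).2 fun c => (dist_pi_le_iff dist_nonneg).2 fun j => ?_
  have hdiff : |(if j = t c then (1 : ℝ) else 0) - (if j = s c then 1 else 0)| ≤ 1 := by
    split_ifs <;> norm_num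
  calc dist ((edgePoint s t μ).1 c j) ((edgePoint s t ν).1 c j)
      = |(μ - ν : ℝ)| * |(if j = t c then (1 : ℝ) else 0) - (if j = s c then 1 else 0)| := by
        rw [Real.dist_eq, ← abs_mul]
        simp only [edgePoint]
        congr 1
        ring
    _ ≤ dist μ ν := mul_le_of_le_one_right (abs_nonneg _) hdiff

lemma edgePoint_apply_self {k : Fin K} (hk : s k ≠ t k) (μ : unitInterval) :
    (edgePoint s t μ).1 k (t k) = μ := by
  simp [edgePoint, Ne.symm hk]

lemma fitness_edgePoint {k : Fin K} (heq : ∀ l ≠ k, s l = t l) (M : Fin K → (∀ j, S j) → ℝ)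
    (μ : unitInterval) (i : S k) :
    fitness M k i (edgePoint s t μ).1 = M k (Function.update s k i) :=
  fitness_of_forall_ne_eq_pure M s (fun c hck j => by
    simp only [edgePoint, ← heq c hck]
    split_ifs <;> ring) i

variable {k : Fin K} (hk : s k ≠ t k) (heq : ∀ l ≠ k, s l = t l)
include hk heq

lemma eq_edgePoint_of_support (z : SimplexProd S)
    (hz : ∀ c, ∀ j, j ≠ s c → j ≠ t c → z.1 c j = 0) :
    z = edgePoint s t (z.prob k (t k)) := by
  ext c j
  by_cases hck : c = k
  · subst hck
    have hsum : z.1 c (s c) + z.1 c (t c) = 1 := by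
      simpa [Finset.sum_eq_add (s c) (t c) hk (fun j _ hj => hz c j hj.1 hj.2)] using z.2.2 c
    by_cases hjs : j = s c
    · subst hjs
      simpa [edgePoint, SimplexProd.prob, hk] using eq_sub_of_add_eq hsum
    · by_cases hjt : j = t c
      · subst hjt
        simp [edgePoint, SimplexProd.prob, hjs]
      · simp [edgePoint, hjs, hjt, hz c j hjs hjt]
  · have hst : s c = t c := heq c hck
    have hzc : ∀ j ≠ s c, z.1 c j = 0 := fun j hj => hz c j hj (hst ▸ hj)
    by_cases hjs : j = s c
    · subst hjs
      simp [edgePoint, ← hst, SimplexProd.eq_one_of_forall_ne_eq_zero z hzc]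
    · simp [edgePoint, ← hst, hjs, hzc j hjs]

lemma replicator_rate_edgePoint (M : Fin K → (∀ j, S j) → ℝ) (ν : unitInterval) :
    (edgePoint s t ν).1 k (t k) * (fitness M k (t k) (edgePoint s t ν).1 -
      ∑ j, (edgePoint s t ν).1 k j * fitness M k j (edgePoint s t ν).1) =
      ν * (1 - ν) * (M k t - M k s) := by
  have hupd : Function.update s k (t k) = t := Function.update_eq_iff.2 ⟨rfl, heq⟩
  simp only [fitness_edgePoint heq, edgePoint_apply_self hk, hupd]
  simp only [edgePoint, mul_ite, mul_one, mul_zero, add_mul, ite_mul, zero_mul,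
    Finset.sum_add_distrib, Finset.sum_ite_eq', Finset.mem_univ, if_true, Function.update_eq_self,
    hupd]
  ring

end Edge

def SolvesReplicator {K : ℕ} {S : Fin K → Type} [∀ k, Fintype (S k)] [∀ k, DecidableEq (S k)]
    (M : Fin K → (∀ j, S j) → ℝ) (φ : ℝ → SimplexProd S → SimplexProd S) : Prop :=
  ∀ (x : SimplexProd S) (k : Fin K) (i : S k) (t : ℝ),
    HasDerivAt (fun τ : ℝ => (φ τ x).1 k i)
      ((φ t x).1 k i * (fitness M k i (φ t x).1 -
        ∑ j : S k, (φ t x).1 k j * fitness M k j (φ t x).1)) t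

namespace SolvesReplicator

variable {K : ℕ} {S : Fin K → Type} [∀ k, Fintype (S k)] [∀ k, DecidableEq (S k)]
  {M : Fin K → (∀ j, S j) → ℝ} {φ : ℝ → SimplexProd S → SimplexProd S}
  (hrep : SolvesReplicator M φ) (hφ0 : ∀ x, φ 0 x = x)
include hrep hφ0

/-- Each growth rate is bounded by `2 ∑ |M k s|`, so Grönwall keeps an extinct strategy
extinct. -/
lemma coord_eq_zero {x : SimplexProd S} {k : Fin K} {i : S k} (hx : x.1 k i = 0) {τ : ℝ}
    (hτ : 0 ≤ τ) : (φ τ x).1 k i = 0 := by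
  refine eq_zero_of_abs_deriv_le_mul_abs_self_of_eq_zero_right (K := 2 * ∑ s, |M k s|)
    (continuous_iff_continuousAt.2 fun τ => (hrep x k i τ).continuousAt).continuousOn
    (fun τ _ => (hrep x k i τ).hasDerivWithinAt) (by rw [hφ0, hx]) (fun τ _ => ?_) τ ⟨hτ, le_rfl⟩
  rw [Real.norm_eq_abs, Real.norm_eq_abs, abs_mul, mul_comm]
  refine mul_le_mul_of_nonneg_right ((abs_sub _ _).trans ?_) (abs_nonneg _)
  linarith [abs_fitness_le M i (φ τ x), abs_mean_fitness_le M (k := k) (φ τ x)]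

lemma map_vertex (s : ∀ j, S j) {τ : ℝ} (hτ : 0 ≤ τ) : φ τ (vertex S s) = vertex S s := by
  have hz : ∀ c, ∀ j ≠ s c, (φ τ (vertex S s)).1 c j = 0 := fun c j hj =>
    hrep.coord_eq_zero hφ0 (by simp [vertex, hj]) hτ
  ext c j
  by_cases hj : j = s c
  · subst hj
    rw [SimplexProd.eq_one_of_forall_ne_eq_zero _ (hz c)]
    simp [vertex]
  · rw [hz c j hj]
    simp [vertex, hj]

lemma vertex_mem_chainRecurrentSet (s : ∀ j, S j) : vertex S s ∈ chainRecurrentSet φ :=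
  mem_chainRecurrentSet_of_forall_pos_map_eq fun _ hτ => hrep.map_vertex hφ0 s hτ.le

section Edge

variable {s t : ∀ j, S j} {k : Fin K} (hk : s k ≠ t k) (heq : ∀ l ≠ k, s l = t l)
include hk heq

lemma map_edgePoint (μ : unitInterval) {τ : ℝ} (hτ : 0 ≤ τ) :
    φ τ (edgePoint s t μ) = edgePoint s t ((φ τ (edgePoint s t μ)).prob k (t k)) :=
  eq_edgePoint_of_support hk heq _ fun c j hjs hjt =>
    hrep.coord_eq_zero hφ0 (by simp [edgePoint, hjs, hjt]) hτ

variable (hM : M k s ≤ M k t)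
include hM

lemma exists_ge_map_edgePoint_eq (μ : unitInterval) {τ : ℝ} (hτ : 0 ≤ τ) :
    ∃ ν ≥ μ, φ τ (edgePoint s t μ) = edgePoint s t ν := by
  let x := edgePoint s t μ
  have hcont : Continuous fun τ => (φ τ x).1 k (t k) :=
    continuous_iff_continuousAt.2 fun τ => (hrep x k (t k) τ).continuousAt
  have hmono : MonotoneOn (fun τ => (φ τ x).1 k (t k)) (Set.Ici 0) := by
    refine monotoneOn_of_deriv_nonneg (convex_Ici 0) hcont.continuousOn
      (fun τ _ => (hrep x k (t k) τ).differentiableAt.differentiableWithinAt) fun τ hτ => ?_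
    rw [interior_Ici] at hτ
    rw [(hrep x k (t k) τ).deriv, hrep.map_edgePoint hφ0 hk heq μ hτ.le,
      replicator_rate_edgePoint hk heq]
    exact mul_nonneg (mul_nonneg (unitInterval.nonneg _) (unitInterval.one_minus_nonneg _))
      (sub_nonneg.2 hM)
  refine ⟨_, ?_, hrep.map_edgePoint hφ0 hk heq μ hτ⟩
  have hμ := hmono Set.self_mem_Ici hτ hτ
  simp only [hφ0, x, edgePoint_apply_self hk] at hμ
  exact hμ

/-- Each step follows the flow for time `T`, then jumps `ε / 2` along the edge towards `t`. -/
lemma isEpsTChain_edgePoint_vertex {ε T : ℝ} (hε : 0 < ε) (hT : 0 < T) (n : ℕ)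
    (μ : unitInterval) (hμ : 1 - (μ : ℝ) ≤ n * (ε / 2)) :
    IsEpsTChain φ ε T (edgePoint s t μ) (vertex S t) := by
  induction n generalizing μ with
  | zero =>
    obtain rfl : μ = 1 := Subtype.ext (le_antisymm μ.2.2 (by simpa using hμ))
    rw [edgePoint_one]
    exact .single le_rfl (by rwa [hrep.map_vertex hφ0 t hT.le, dist_self])
  | succ n ih =>
    obtain ⟨ν, hμν, hν⟩ := hrep.exists_ge_map_edgePoint_eq hφ0 hk heq hM μ hT.le
    let ν' : unitInterval := Set.projIcc 0 1 zero_le_one (ν + ε / 2)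
    refine .cons le_rfl ?_ (ih ν' ?_)
    · calc dist (φ T (edgePoint s t μ)) (edgePoint s t ν')
          ≤ dist ν ν' := hν ▸ dist_edgePoint_le ν ν'
        _ ≤ dist (ν : ℝ) (ν + ε / 2) := by
          simpa [Set.projIcc_val] using
            (LipschitzWith.projIcc zero_le_one).dist_le_mul ν (ν + ε / 2)
        _ < ε := by rw [Real.dist_eq, abs_of_neg (by linarith)]; linarith
    · have hμν : (μ : ℝ) ≤ ν := hμν
      have hn : (0 : ℝ) ≤ n * (ε / 2) := by positivity
      rw [Set.coe_projIcc]
      push_cast at hμ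
      rcases min_cases 1 ((ν : ℝ) + ε / 2) with ⟨h, _⟩ | ⟨h, _⟩ <;> rw [h]
      · simpa using hn
      · rw [max_eq_right (by linarith [unitInterval.nonneg ν])]
        linarith

end Edge

lemma vertex_mem_forwardChainLimit {s t : ∀ j, S j} (hedge : RespEdge M s t) :
    vertex S t ∈ forwardChainLimit φ (vertex S s) := by
  obtain ⟨k, hk, heq, hM⟩ := hedge
  intro ε hε T hT
  obtain ⟨n, hn⟩ := exists_nat_ge (2 / ε)
  rw [← edgePoint_zero (t := t)]
  refine hrep.isEpsTChain_edgePoint_vertex hφ0 hk heq hM hε hT n 0 ?_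
  rw [div_le_iff₀ hε] at hn
  push_cast
  linarith

end SolvesReplicator

theorem sink_chain_component_contains_MCC_general
    {K : ℕ} (S : Fin K → Type)
    [∀ k, Fintype (S k)] [∀ k, DecidableEq (S k)]
    (M : ∀ k : Fin K, (∀ j, S j) → ℝ)
    (φ : ℝ → SimplexProd S → SimplexProd S) (hφ : IsFlow φ)
    (hrep : ∀ (x : SimplexProd S) (k : Fin K) (i : S k) (t : ℝ),
      HasDerivAt (fun τ : ℝ => (φ τ x).1 k i)
        ((φ t x).1 k i * (fitness M k i (φ t x).1 -
          ∑ j : S k, (φ t x).1 k j * fitness M k j (φ t x).1)) t)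
    (A : Set (SimplexProd S)) (hA : IsSinkChainComponent φ A)
    (si : ∀ j, S j) (hsi : vertex S si ∈ A) :
    (∀ sj : ∀ j, S j,
      Relation.ReflTransGen (RespEdge M) si sj → vertex S sj ∈ A) ∧
    ∃ B : Set (∀ j, S j), IsSinkSCC M B ∧ ∀ t ∈ B, vertex S t ∈ A := by
  have hreach : ∀ sj, Relation.ReflTransGen (RespEdge M) si sj → vertex S sj ∈ A := by
    intro sj h
    induction h with
    | refl => exact hsi
    | tail _ hedge ih =>
      exact hA.mem_of_mem_forwardChainLimit ih
        (SolvesReplicator.vertex_mem_chainRecurrentSet hrep hφ.map_zero _)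
        (SolvesReplicator.vertex_mem_forwardChainLimit hrep hφ.map_zero hedge)
  obtain ⟨t, hsit, ht⟩ := Relation.exists_reflTransGen_maximal (RespEdge M) si
  exact ⟨hreach, _, isSinkSCC_of_maximal ht, fun u hu => hreach u (hsit.trans hu.1)⟩

/-- If a sink chain component of a flow `φ` satisfying the K-population replicator
equations contains the vertex of a pure strategy profile `sᵢ`, then it contains the
vertex of every profile reachable from `sᵢ` in the response graph; in particular it
contains (the vertices of) at least one Markov-Conley chain, i.e., a sink strongly
connected component of the response graph. -/
theorem sink_chain_component_contains_MCC
    {K : ℕ} (hK : 1 ≤ K) (S : Fin K → Type)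
    [∀ k, Fintype (S k)] [∀ k, DecidableEq (S k)] [∀ k, Nonempty (S k)]
    (M : ∀ k : Fin K, (∀ j, S j) → ℝ)
    (φ : ℝ → SimplexProd S → SimplexProd S) (hφ : IsFlow φ)
    (hrep : ∀ (x : SimplexProd S) (k : Fin K) (i : S k) (t : ℝ),
      HasDerivAt (fun τ : ℝ => (φ τ x).1 k i)
        ((φ t x).1 k i * (fitness M k i (φ t x).1 -
          ∑ j : S k, (φ t x).1 k j * fitness M k j (φ t x).1)) t)
    (A : Set (SimplexProd S)) (hA : IsSinkChainComponent φ A)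
    (si : ∀ j, S j) (hsi : vertex S si ∈ A) :
    (∀ sj : ∀ j, S j,
      Relation.ReflTransGen (RespEdge M) si sj → vertex S sj ∈ A) ∧
    ∃ B : Set (∀ j, S j), IsSinkSCC M B ∧ ∀ t ∈ B, vertex S t ∈ A :=
  sink_chain_component_contains_MCC_general S M φ hφ hrep A hA si hsi
end
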